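/- arXiv:1801.06455 — 6 statements merged into one kernel-verified Lean document; each statement's English description precedes it below -/
import Mathlib

section
/- For every Δt₀ ∈ (0,1) and every Δt ∈ [0, Δt₀], the mapping Φ_{Δt} is globally Lipschitz continuous with Lipschitz constant at most e^{Δt}: for all z₁, z₂ ∈ ℝ, |Φ_{Δt}(z₂) − Φ_{Δt}(z₁)| ≤ e^{Δt}|z₂ − z₁|. -/
/-- The time-`t` flow map of the ODE `ż = z - z³`:
`Φ_t(z) = z / √(e^{-2t} + (1 - e^{-2t}) z²)`. -/
noncomputable def Phi (t z : ℝ) : ℝ :=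
  z / Real.sqrt (Real.exp (-2 * t) + (1 - Real.exp (-2 * t)) * z ^ 2)

/-- For every `Δt₀ ∈ (0,1)` and every `Δt ∈ [0, Δt₀]`, the mapping `Φ_{Δt}` is globally
Lipschitz continuous with Lipschitz constant at most `e^{Δt}`. -/
theorem stmt4 (Δt₀ : ℝ) (hΔt₀ : Δt₀ ∈ Set.Ioo (0 : ℝ) 1)
    (Δt : ℝ) (hΔt : Δt ∈ Set.Icc (0 : ℝ) Δt₀) :
    ∀ z₁ z₂ : ℝ, |Phi Δt z₂ - Phi Δt z₁| ≤ Real.exp Δt * |z₂ - z₁| := by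
  intro z₁ z₂
  obtain ⟨ht0, _⟩ := hΔt
  set a : ℝ := Real.exp (-2 * Δt) with ha
  have hapos : 0 < a := Real.exp_pos _
  have ha1 : a ≤ 1 := Real.exp_le_one_iff.mpr (by linarith)
  have hb : 0 ≤ 1 - a := by linarith
  -- derivative of Phi Δt
  have hderiv : ∀ z : ℝ, HasDerivAt (Phi Δt)
      (a / Real.sqrt (a + (1 - a) * z ^ 2) ^ 3) z := by
    intro z
    have hD : 0 < a + (1 - a) * z ^ 2 := by positivity
    set s : ℝ := Real.sqrt (a + (1 - a) * z ^ 2) with hs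
    have hspos : 0 < s := Real.sqrt_pos.mpr hD
    have hs2 : s ^ 2 = a + (1 - a) * z ^ 2 := Real.sq_sqrt hD.le
    have h1 : HasDerivAt (fun z : ℝ => a + (1 - a) * z ^ 2) ((1 - a) * (2 * z)) z := by
      have := ((hasDerivAt_pow 2 z).const_mul (1 - a)).const_add a
      simpa [mul_comm, mul_assoc, mul_left_comm] using this
    have h2 : HasDerivAt (fun z : ℝ => Real.sqrt (a + (1 - a) * z ^ 2))
        ((1 - a) * (2 * z) / (2 * s)) z := h1.sqrt hD.ne'
    have h3 := (hasDerivAt_id z).div h2 hspos.ne'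
    have h5 : s ^ 5 = s ^ 3 * (a + (1 - a) * z ^ 2) := by
      rw [← hs2]; ring
    have heq : (1 * s - z * ((1 - a) * (2 * z) / (2 * s))) / s ^ 2 = a / s ^ 3 := by
      field_simp
      nlinarith [hs2, h5, sq_nonneg s]
    have : HasDerivAt (Phi Δt) ((1 * s - z * ((1 - a) * (2 * z) / (2 * s))) / s ^ 2) z := h3
    rwa [heq] at this
  -- bound on the derivative
  have hbound : ∀ z : ℝ, |a / Real.sqrt (a + (1 - a) * z ^ 2) ^ 3| ≤ Real.exp Δt := by
    intro z
    have hD : 0 < a + (1 - a) * z ^ 2 := by positivity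
    set s : ℝ := Real.sqrt (a + (1 - a) * z ^ 2) with hs
    have hspos : 0 < s := Real.sqrt_pos.mpr hD
    have hsa : Real.exp (-Δt) ≤ s := by
      have h6 : Real.exp (-Δt) = Real.sqrt a := by
        rw [ha, show (-2 : ℝ) * Δt = (-Δt) + (-Δt) by ring, Real.exp_add,
          Real.sqrt_mul_self (Real.exp_pos _).le]
      rw [h6]
      exact Real.sqrt_le_sqrt (by nlinarith)
    have hcube : Real.exp (-Δt) ^ 3 ≤ s ^ 3 := by
      apply pow_le_pow_left₀ (Real.exp_pos _).le hsa
    rw [abs_of_nonneg (by positivity)]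
    rw [div_le_iff₀ (by positivity)]
    calc a = Real.exp Δt * (Real.exp (-Δt)) ^ 3 := by
            rw [show Real.exp (-Δt) ^ 3 =
                Real.exp (-Δt) * (Real.exp (-Δt) * Real.exp (-Δt)) by ring,
              ← Real.exp_add, ← Real.exp_add, ← Real.exp_add, ha]
            ring_nf
      _ ≤ Real.exp Δt * s ^ 3 := by
            apply mul_le_mul_of_nonneg_left hcube (Real.exp_pos _).le
  have := convex_univ.norm_image_sub_le_of_norm_hasDerivWithin_le
    (f := Phi Δt) (f' := fun z => a / Real.sqrt (a + (1 - a) * z ^ 2) ^ 3)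
    (fun x _ => (hderiv x).hasDerivWithinAt) (fun x _ => by
      rw [Real.norm_eq_abs]; exact hbound x) (Set.mem_univ z₁) (Set.mem_univ z₂)
  simpa [Real.norm_eq_abs] using this
end

section
/- For every Δt₀ ∈ (0,1) and every Δt ∈ (0, Δt₀], the mapping Ψ_{Δt} satisfies the one-sided Lipschitz condition: for all z₁, z₂ ∈ ℝ, (Ψ_{Δt}(z₂) − Ψ_{Δt}(z₁))(z₂ − z₁) ≤ e^{Δt}(z₂ − z₁)². -/
/-- `Ψ_{Δt}(z) = (Φ_{Δt}(z) - z) / Δt`. -/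
noncomputable def Psi (Δt z : ℝ) : ℝ := (Phi Δt z - z) / Δt

lemma phi_lip (t : ℝ) (ht : 0 < t) (z₁ z₂ : ℝ) :
    |Phi t z₂ - Phi t z₁| ≤ Real.exp t * |z₂ - z₁| := by
  set a : ℝ := Real.exp (-2 * t) with ha_def
  have ha : 0 < a := Real.exp_pos _
  have ha1 : a ≤ 1 := by
    rw [ha_def]
    exact Real.exp_le_one_iff.mpr (by linarith)
  set b : ℝ := 1 - a with hb_def
  have hb : 0 ≤ b := by linarith
  set g : ℝ → ℝ := fun z => a + b * z ^ 2 with hg_def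
  have hgpos : ∀ z : ℝ, 0 < g z := by
    intro z
    have : 0 ≤ b * z ^ 2 := mul_nonneg hb (sq_nonneg z)
    simp only [hg_def]; nlinarith
  have hga : ∀ z : ℝ, a ≤ g z := by
    intro z
    have : 0 ≤ b * z ^ 2 := mul_nonneg hb (sq_nonneg z)
    simp only [hg_def]; linarith
  set f' : ℝ → ℝ := fun z => (1 * Real.sqrt (g z) - z * (b * z / Real.sqrt (g z)))
      / (Real.sqrt (g z)) ^ 2 with hf'_def
  have hderiv : ∀ z : ℝ, HasDerivAt (Phi t) (f' z) z := by
    intro z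
    have hg : HasDerivAt g (2 * b * z) z := by
      have h0 : HasDerivAt (fun z : ℝ => a + b * z ^ 2) (b * (2 * z ^ 1)) z :=
        (hasDerivAt_pow 2 z).const_mul b |>.const_add a
      convert h0 using 1
      ring
    have hsq : HasDerivAt (fun z => Real.sqrt (g z)) (b * z / Real.sqrt (g z)) z := by
      have hne : Real.sqrt (g z) ≠ 0 := ne_of_gt (Real.sqrt_pos.mpr (hgpos z))
      have := (Real.hasDerivAt_sqrt (ne_of_gt (hgpos z))).comp z hg
      refine this.congr_deriv ?_
      field_simp
    have hne : Real.sqrt (g z) ≠ 0 := ne_of_gt (Real.sqrt_pos.mpr (hgpos z))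
    have := (hasDerivAt_id z).div hsq hne
    exact this
  have hsq_a : Real.sqrt a = Real.exp (-t) := by
    have : a = Real.exp (-t) ^ 2 := by
      rw [ha_def, sq, ← Real.exp_add]; ring_nf
    rw [this, Real.sqrt_sq (le_of_lt (Real.exp_pos _))]
  have hbound : ∀ z : ℝ, |f' z| ≤ Real.exp t := by
    intro z
    have hgz := hgpos z
    have hsg : 0 < Real.sqrt (g z) := Real.sqrt_pos.mpr hgz
    have hs2 : Real.sqrt (g z) * Real.sqrt (g z) = g z := Real.mul_self_sqrt hgz.le
    have hsne : Real.sqrt (g z) ≠ 0 := ne_of_gt hsg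
    have hval : f' z = a / (g z * Real.sqrt (g z)) := by
      simp only [hf'_def]
      rw [div_eq_div_iff (by positivity) (by positivity)]
      field_simp
      have hgb : g z - z * (b * z) = a := by simp only [hg_def]; ring
      rw [Real.sq_sqrt hgz.le]; linear_combination (g z) * hgb
    rw [hval, abs_of_nonneg (by positivity)]
    have h1 : a * Real.sqrt a ≤ g z * Real.sqrt (g z) := by
      have := Real.sqrt_le_sqrt (hga z)
      have ha' : (0:ℝ) < Real.sqrt a := Real.sqrt_pos.mpr ha
      nlinarith [hga z]
    have h2 : a / (g z * Real.sqrt (g z)) ≤ a / (a * Real.sqrt a) := by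
      apply div_le_div_of_nonneg_left (le_of_lt ha) _ h1
      positivity
    refine h2.trans ?_
    have : a / (a * Real.sqrt a) = 1 / Real.sqrt a := by
      field_simp
    rw [this, hsq_a, one_div, ← Real.exp_neg, neg_neg]
  calc |Phi t z₂ - Phi t z₁| = ‖Phi t z₂ - Phi t z₁‖ := rfl
    _ ≤ Real.exp t * ‖z₂ - z₁‖ := by
        apply Convex.norm_image_sub_le_of_norm_hasDerivWithin_le
          (f' := f') (fun x _ => (hderiv x).hasDerivWithinAt)
          (fun x _ => hbound x) convex_univ (Set.mem_univ _) (Set.mem_univ _)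
    _ = Real.exp t * |z₂ - z₁| := rfl

/-- For every `Δt₀ ∈ (0,1)` and every `Δt ∈ (0, Δt₀]`, the mapping `Ψ_{Δt}` satisfies
the one-sided Lipschitz condition with constant `e^{Δt}`. -/
theorem stmt6 (Δt₀ : ℝ) (hΔt₀ : Δt₀ ∈ Set.Ioo (0 : ℝ) 1)
    (Δt : ℝ) (hΔt : Δt ∈ Set.Ioc (0 : ℝ) Δt₀) :
    ∀ z₁ z₂ : ℝ,
      (Psi Δt z₂ - Psi Δt z₁) * (z₂ - z₁) ≤ Real.exp Δt * (z₂ - z₁) ^ 2 := by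
  intro z₁ z₂
  have ht : 0 < Δt := hΔt.1
  have hlip := phi_lip Δt ht z₁ z₂
  have hE : 0 < Real.exp Δt := Real.exp_pos _
  have key : Real.exp Δt - 1 ≤ Δt * Real.exp Δt := by
    have h := Real.add_one_le_exp (-Δt)
    have : (-Δt + 1) * Real.exp Δt ≤ Real.exp (-Δt) * Real.exp Δt :=
      mul_le_mul_of_nonneg_right h (le_of_lt hE)
    rw [← Real.exp_add] at this
    simp at this
    nlinarith
  have habs : (Phi Δt z₂ - Phi Δt z₁) * (z₂ - z₁) ≤ Real.exp Δt * (z₂ - z₁) ^ 2 := by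
    calc (Phi Δt z₂ - Phi Δt z₁) * (z₂ - z₁)
        ≤ |Phi Δt z₂ - Phi Δt z₁| * |z₂ - z₁| := by
          rw [← abs_mul]; exact le_abs_self _
      _ ≤ (Real.exp Δt * |z₂ - z₁|) * |z₂ - z₁| :=
          mul_le_mul_of_nonneg_right hlip (abs_nonneg _)
      _ = Real.exp Δt * (z₂ - z₁) ^ 2 := by rw [mul_assoc, ← abs_mul, ← sq, abs_sq]
  have hPsi : (Psi Δt z₂ - Psi Δt z₁) * (z₂ - z₁)
      = ((Phi Δt z₂ - Phi Δt z₁) * (z₂ - z₁) - (z₂ - z₁) ^ 2) / Δt := by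
    simp only [Psi]
    field_simp
    ring
  rw [hPsi, div_le_iff₀ ht]
  nlinarith [sq_nonneg (z₂ - z₁)]
end

section
/- For every Δt > 0 and every z ∈ ℝ, the derivative of Ψ_{Δt} satisfies Ψ_{Δt}′(z) ≤ e^{Δt}. -/
lemma phi_hasDerivAt (t z : ℝ) (ht : 0 ≤ t) :
    HasDerivAt (fun w => Phi t w)
      (Real.exp (-2 * t) /
        ((Real.exp (-2 * t) + (1 - Real.exp (-2 * t)) * z ^ 2) *
          Real.sqrt (Real.exp (-2 * t) + (1 - Real.exp (-2 * t)) * z ^ 2))) z := by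
  set a := Real.exp (-2 * t) with ha
  have ha0 : 0 < a := Real.exp_pos _
  have ha1 : a ≤ 1 := Real.exp_le_one_iff.mpr (by nlinarith)
  set D := a + (1 - a) * z ^ 2 with hD
  have hD0 : 0 < D := by nlinarith [sq_nonneg z]
  have hs0 : 0 < Real.sqrt D := Real.sqrt_pos.mpr hD0
  have hinner : HasDerivAt (fun w : ℝ => a + (1 - a) * w ^ 2) ((1 - a) * (2 * z)) z := by
    have := ((hasDerivAt_pow 2 z).const_mul (1 - a)).const_add a
    simpa [mul_comm, mul_assoc, mul_left_comm] using this
  have hsqrt : HasDerivAt (fun w : ℝ => Real.sqrt (a + (1 - a) * w ^ 2))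
      ((1 - a) * (2 * z) / (2 * Real.sqrt D)) z := hinner.sqrt hD0.ne'
  have hdiv := (hasDerivAt_id z).div hsqrt hs0.ne'
  have hsq : Real.sqrt D ^ 2 = D := Real.sq_sqrt hD0.le
  convert hdiv using 1
  case e'_4 => rfl
  case e'_5 => rfl
  case e'_8 => rfl
  rw [div_eq_div_iff (by positivity) (by positivity)]
  rw [← hD]
  simp only [id]
  field_simp
  linear_combination (a - D) * hsq - D * hD

/-- For every `Δt > 0` and every `z ∈ ℝ`, the derivative of `Ψ_{Δt}` satisfies
`Ψ_{Δt}'(z) ≤ e^{Δt}`. -/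
theorem stmt10 (Δt : ℝ) (hΔt : 0 < Δt) (z : ℝ) :
    deriv (fun w : ℝ => Psi Δt w) z ≤ Real.exp Δt := by
  set a := Real.exp (-2 * Δt) with ha
  have ha0 : 0 < a := Real.exp_pos _
  have ha1 : a ≤ 1 := Real.exp_le_one_iff.mpr (by nlinarith)
  set D := a + (1 - a) * z ^ 2 with hD
  have hD0 : 0 < D := by nlinarith [sq_nonneg z]
  have hDa : a ≤ D := by nlinarith [sq_nonneg z]
  have hphi := phi_hasDerivAt Δt z hΔt.le
  have hpsi : HasDerivAt (fun w : ℝ => Psi Δt w)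
      ((a / (D * Real.sqrt D) - 1) / Δt) z := by
    exact ((hphi.sub (hasDerivAt_id z)).div_const Δt)
  rw [hpsi.deriv]
  have hsa : Real.sqrt a = Real.exp (-Δt) := by
    rw [ha, ← Real.exp_half]; ring_nf
  have hmono : a / (D * Real.sqrt D) ≤ Real.exp Δt := by
    have h1 : a / (D * Real.sqrt D) ≤ a / (a * Real.sqrt a) := by
      apply div_le_div_of_nonneg_left ha0.le (by positivity)
      exact mul_le_mul hDa (Real.sqrt_le_sqrt hDa) (Real.sqrt_nonneg a) hD0.le
    have h2 : a / (a * Real.sqrt a) = Real.exp Δt := by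
      have : a / (a * Real.sqrt a) = 1 / Real.sqrt a := by
        rw [div_eq_div_iff (by positivity) (by positivity)]; ring
      rw [this, hsa, Real.exp_neg, one_div, inv_inv]
    linarith [h1, h2.le]
  -- (exp Δt - 1)/Δt ≤ exp Δt from 1 - Δt ≤ exp (-Δt)
  have hkey : Real.exp Δt - 1 ≤ Δt * Real.exp Δt := by
    have h := mul_le_mul_of_nonneg_left (Real.add_one_le_exp (-Δt)) (Real.exp_pos Δt).le
    have hprod : Real.exp Δt * Real.exp (-Δt) = 1 := by
      rw [← Real.exp_add]; simp
    nlinarith [h, hprod]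
  rw [div_le_iff₀ hΔt]
  nlinarith [hkey, hmono, hΔt]
end

section
/- For every Δt₀ ∈ (0,1), there exists a constant C(Δt₀) ∈ (0,∞) such that for all Δt ∈ (0, Δt₀] and all z ∈ ℝ, |Ψ_{Δt}(z)| ≤ C(Δt₀)(1 + |z|⁴). -/
/-- For every `Δt₀ ∈ (0,1)`, there exists `C(Δt₀) ∈ (0,∞)` such that for all
`Δt ∈ (0, Δt₀]` and all `z : ℝ`, `|Ψ_{Δt}(z)| ≤ C(Δt₀) (1 + |z|⁴)`. -/
theorem stmt12 (Δt₀ : ℝ) (hΔt₀ : Δt₀ ∈ Set.Ioo (0 : ℝ) 1) :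
    ∃ C : ℝ, 0 < C ∧
      ∀ Δt ∈ Set.Ioc (0 : ℝ) Δt₀, ∀ z : ℝ,
        |Psi Δt z| ≤ C * (1 + |z| ^ 4) := by
  refine ⟨12, by norm_num, ?_⟩
  rintro Δt ⟨hΔt, hΔtle⟩ z
  have hΔt1 : Δt ≤ 1 := hΔtle.trans hΔt₀.2.le
  set a := Real.exp (-2 * Δt) with ha
  have ha0 : 0 < a := Real.exp_pos _
  have ha1 : a ≤ 1 := Real.exp_le_one_iff.2 (by nlinarith)
  have hE0 : 0 < a + (1 - a) * z ^ 2 := by nlinarith [sq_nonneg z]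
  set D := Real.sqrt (a + (1 - a) * z ^ 2) with hDdef
  have hD0 : 0 < D := Real.sqrt_pos.2 hE0
  have hD2 : D ^ 2 = a + (1 - a) * z ^ 2 := Real.sq_sqrt hE0.le
  -- lower bound on D
  have hexp3 : Real.exp 1 < 3 := lt_trans Real.exp_one_lt_d9 (by norm_num)
  have hDlb : (1 : ℝ) / 3 ≤ D := by
    have h1 : Real.sqrt a ≤ D := Real.sqrt_le_sqrt (by nlinarith [sq_nonneg z])
    have h2 : Real.sqrt a = Real.exp (-Δt) := by
      rw [ha, ← Real.exp_half]; ring_nf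
    have h3 : Real.exp (-1 : ℝ) ≤ Real.exp (-Δt) := Real.exp_le_exp.2 (by linarith)
    have h4 : (1 : ℝ) / 3 ≤ Real.exp (-1 : ℝ) := by
      rw [Real.exp_neg]
      rw [div_le_iff₀ (by norm_num : (0:ℝ) < 3)]
      rw [inv_mul_eq_div, le_div_iff₀ (Real.exp_pos 1)]
      linarith
    linarith [h2 ▸ h1]
  -- 1 - a ≤ 2 Δt
  have h2Δt : 1 - a ≤ 2 * Δt := by
    have := Real.add_one_le_exp (-2 * Δt)
    linarith
  -- |1 - D| ≤ (1 - a)(1 + z²)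
  have h1D : |1 - D| ≤ (1 - a) * (1 + z ^ 2) := by
    have hfac : (1 - D) * (1 + D) = (1 - a) * (1 - z ^ 2) := by nlinarith [hD2]
    have habs : |1 - D| * (1 + D) = (1 - a) * |1 - z ^ 2| := by
      rw [← abs_of_pos (show (0:ℝ) < 1 + D by linarith), ← abs_mul, hfac, abs_mul,
        abs_of_nonneg (by linarith : (0:ℝ) ≤ 1 - a)]
    have hz2 : |1 - z ^ 2| ≤ 1 + z ^ 2 :=
      abs_le.2 ⟨by nlinarith [sq_nonneg z], by nlinarith [sq_nonneg z]⟩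
    nlinarith [abs_nonneg (1 - D), abs_nonneg (1 - z ^ 2), hD0.le]
  -- main bound on |Phi - z|
  have hkey : Phi Δt z - z = z * (1 - D) / D := by
    rw [Phi, ← ha, ← hDdef]
    field_simp
  have habs2 : |Phi Δt z - z| = |z| * |1 - D| / D := by
    rw [hkey, abs_div, abs_mul, abs_of_pos hD0]
  have hbound : |Phi Δt z - z| ≤ 12 * (1 + |z| ^ 4) * Δt := by
    rw [habs2, div_le_iff₀ hD0]
    have step1 : |z| * |1 - D| ≤ |z| * ((1 - a) * (1 + z ^ 2)) :=
      mul_le_mul_of_nonneg_left h1D (abs_nonneg z)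
    have step3 : |z| * ((1 - a) * (1 + z ^ 2)) ≤ 2 * Δt * (|z| * (1 + z ^ 2)) := by
      nlinarith [abs_nonneg z, sq_nonneg z, mul_nonneg (abs_nonneg z) (sq_nonneg z)]
    have step4 : |z| * (1 + z ^ 2) ≤ 2 * (1 + |z| ^ 4) := by
      nlinarith [sq_abs z, sq_nonneg (|z| - 1), sq_nonneg (|z| ^ 2 - 1), abs_nonneg z,
        sq_nonneg (|z| ^ 2 - |z|)]
    have hpos : (0 : ℝ) ≤ 1 + |z| ^ 4 := by positivity
    nlinarith [mul_le_mul_of_nonneg_left hDlb (mul_nonneg (by nlinarith : (0:ℝ) ≤ 12 * Δt) hpos)]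
  rw [Psi, abs_div, abs_of_pos hΔt, div_le_iff₀ hΔt]
  exact hbound
end

section
/- For every Δt > 0 and every z ∈ ℝ, the derivative of Ψ_{Δt} satisfies |Ψ_{Δt}′(z)| ≤ 3e^{3Δt}(1 + z²). -/
set_option maxHeartbeats 1000000 in
/-- For every `Δt > 0` and every `z ∈ ℝ`, the derivative of `Ψ_{Δt}` satisfies
`|Ψ_{Δt}'(z)| ≤ 3 e^{3Δt} (1 + z²)`. -/
theorem stmt13 (Δt : ℝ) (hΔt : 0 < Δt) (z : ℝ) :
    |deriv (fun w : ℝ => Psi Δt w) z| ≤ 3 * Real.exp (3 * Δt) * (1 + z ^ 2) := by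
  set a := Real.exp (-2 * Δt) with ha_def
  have ha0 : 0 < a := Real.exp_pos _
  have ha1 : a < 1 := by
    rw [ha_def]; exact Real.exp_lt_one_iff.mpr (by linarith)
  set b := (1 : ℝ) - a with hb_def
  have hb0 : 0 < b := by simp only [hb_def]; linarith
  have hsz : (0:ℝ) < a + b * z ^ 2 := by nlinarith [sq_nonneg z]
  set s := a + b * z ^ 2 with hs_def
  set q := Real.sqrt s with hq_def
  have hq0 : 0 < q := Real.sqrt_pos.mpr hsz
  have hq2 : q ^ 2 = s := Real.sq_sqrt hsz.le
  have hsq0 : 0 < s * q := mul_pos hsz hq0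
  -- derivative computation
  have hinner : HasDerivAt (fun w : ℝ => a + b * w ^ 2) (b * (2 * z)) z := by
    simpa using ((hasDerivAt_pow 2 z).const_mul b).const_add a
  have hsqrt : HasDerivAt (fun w : ℝ => Real.sqrt (a + b * w ^ 2))
      (1 / (2 * q) * (b * (2 * z))) z := by
    have := (Real.hasDerivAt_sqrt hsz.ne').comp z hinner
    simpa [hq_def, hs_def, Function.comp_def] using this
  have hPhi : HasDerivAt (fun w : ℝ => Phi Δt w) (a / (s * q)) z := by
    have hne : Real.sqrt (a + b * z ^ 2) ≠ 0 := by
      rw [← hs_def, ← hq_def]; exact hq0.ne'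
    have hdiv := (hasDerivAt_id z).div hsqrt hne
    have hfun : (fun w : ℝ => Phi Δt w) = fun w : ℝ => w / Real.sqrt (a + b * w ^ 2) := by
      funext w; simp only [Phi, hb_def, ha_def]
    rw [hfun]
    have heq : (1 * Real.sqrt (a + b * z ^ 2) - id z * (1 / (2 * q) * (b * (2 * z))))
        / Real.sqrt (a + b * z ^ 2) ^ 2 = a / (s * q) := by
      rw [← hs_def, ← hq_def, ← hq2, id]
      field_simp
      linear_combination hq2
    rw [← heq]
    exact hdiv
  have hPsi : HasDerivAt (fun w : ℝ => Psi Δt w) ((a / (s * q) - 1) / Δt) z := by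
    have := (hPhi.sub (hasDerivAt_id z)).div_const Δt
    simpa [Psi] using this
  rw [hPsi.deriv]
  -- now the inequality
  set E := Real.exp (3 * Δt) with hE_def
  set u := Real.exp (-Δt) with hu_def
  have hu0 : 0 < u := Real.exp_pos _
  have hu1 : u ≤ 1 := Real.exp_le_one_iff.mpr (by linarith)
  have hau : a = u ^ 2 := by rw [ha_def, hu_def, sq, ← Real.exp_add]; ring_nf
  have hqu : u ≤ q := by
    have h1 : u = Real.sqrt a := by rw [hau, Real.sqrt_sq hu0.le]
    rw [h1, hq_def]
    exact Real.sqrt_le_sqrt (by nlinarith [sq_nonneg z])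
  have hE3 : E * u ^ 3 = 1 := by
    rw [hE_def, hu_def, ← Real.exp_nat_mul, ← Real.exp_add]; norm_num
  have hE0 : 0 < E := Real.exp_pos _
  have hb2 : b ≤ 2 * Δt := by
    have := Real.add_one_le_exp (-2 * Δt)
    rw [hb_def, ha_def]; linarith
  clear_value a b s q E u
  clear ha_def hE_def hu_def hq_def hinner hsqrt hPhi hPsi
  have h1q : (0:ℝ) < 1 + q := by linarith
  -- key auxiliary bounds
  have hsl : u ^ 2 ≤ s := by rw [hs_def, ← hau]; nlinarith [sq_nonneg z]
  have hEsq : 1 ≤ E * (s * q) := by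
    have h1 : u ^ 2 * u ≤ s * q := mul_le_mul hsl hqu hu0.le hsz.le
    nlinarith [h1]
  have hEu : 1 ≤ E * u := by nlinarith [hE3, hu0, hu1, mul_pos hE0 hu0]
  have hEu2 : 1 ≤ E * u ^ 2 := by nlinarith [hE3, hu0, hu1, mul_pos hE0 hu0]
  have hEq : 1 ≤ E * q := le_trans hEu (by nlinarith [hqu, hE0])
  have hEq2 : 1 ≤ E * q ^ 2 := by
    refine le_trans hEu2 ?_
    have : u ^ 2 ≤ q ^ 2 := by nlinarith [hqu, hu0]
    nlinarith [hE0, this]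
  -- identity
  have hid : (a - s * q) * (1 + q) = -(b * z ^ 2) * (1 + q) + s * (b * (1 - z ^ 2)) := by
    linear_combination (-s) * hq2 + (-(1 + q) - s) * hs_def + (-s) * hb_def
  have step1 : |a - s * q| * (1 + q) ≤ b * z ^ 2 * (1 + q) + s * b * (1 + z ^ 2) := by
    have habs1 : |(-(b * z ^ 2)) * (1 + q)| = b * z ^ 2 * (1 + q) := by
      rw [abs_mul, abs_neg, abs_of_nonneg (by positivity), abs_of_pos h1q]
    have habs2 : |s * (b * (1 - z ^ 2))| ≤ s * b * (1 + z ^ 2) := by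
      rw [abs_mul, abs_of_pos hsz, abs_mul, abs_of_pos hb0]
      have : |1 - z ^ 2| ≤ 1 + z ^ 2 := by
        rw [abs_le]; constructor <;> nlinarith [sq_nonneg z]
      nlinarith [mul_le_mul_of_nonneg_left this (mul_nonneg hsz.le hb0.le)]
    calc |a - s * q| * (1 + q) = |(a - s * q) * (1 + q)| := by
          rw [abs_mul, abs_of_pos h1q]
      _ = |(-(b * z ^ 2)) * (1 + q) + s * (b * (1 - z ^ 2))| := by rw [hid]
      _ ≤ |(-(b * z ^ 2)) * (1 + q)| + |s * (b * (1 - z ^ 2))| := abs_add_le _ _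
      _ ≤ b * z ^ 2 * (1 + q) + s * b * (1 + z ^ 2) := by rw [habs1]; linarith [habs2]
  have core : z ^ 2 * (1 + q) + s * (1 + z ^ 2)
      ≤ (3 / 2) * E * (1 + z ^ 2) * (s * q) * (1 + q) := by
    have h1 : 0 ≤ (1 + q) * (1 + z ^ 2) * (E * (s * q) - 1) := by
      apply mul_nonneg (mul_nonneg h1q.le (by positivity)); linarith
    have h2 : 0 ≤ s * (1 + z ^ 2) * (E * q - 1) := by
      apply mul_nonneg (mul_nonneg hsz.le (by positivity)); linarith
    have h3 : 0 ≤ s * (1 + z ^ 2) * (E * q ^ 2 - 1) := by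
      apply mul_nonneg (mul_nonneg hsz.le (by positivity)); linarith
    nlinarith [h1, h2, h3, hq0]
  have step2 : b * z ^ 2 * (1 + q) + s * b * (1 + z ^ 2)
      ≤ 3 * E * (1 + z ^ 2) * Δt * (s * q) * (1 + q) := by
    have hY : (0:ℝ) ≤ (3 / 2) * E * (1 + z ^ 2) * (s * q) * (1 + q) := by positivity
    nlinarith [mul_le_mul_of_nonneg_left core hb0.le,
      mul_le_mul_of_nonneg_right hb2 hY]
  -- assemble
  rw [abs_div, abs_of_pos hΔt, div_le_iff₀ hΔt]
  have heq : a / (s * q) - 1 = (a - s * q) / (s * q) := by field_simp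
  rw [heq, abs_div, abs_of_pos hsq0, div_le_iff₀ hsq0]
  rw [← mul_le_mul_iff_of_pos_right h1q]
  calc |a - s * q| * (1 + q) ≤ b * z ^ 2 * (1 + q) + s * b * (1 + z ^ 2) := step1
    _ ≤ 3 * E * (1 + z ^ 2) * Δt * (s * q) * (1 + q) := step2
end

section
/- For every Δt₀ ∈ (0,1), there exists a constant C(Δt₀) ∈ (0,∞) such that for all Δt ∈ (0, Δt₀] and all z ∈ ℝ, |Ψ_{Δt}(z) − Ψ₀(z)| ≤ C(Δt₀)·Δt·(1 + |z|⁵). -/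
lemma D_pos {t : ℝ} (ht : 0 ≤ t) (z : ℝ) :
    0 < Real.exp (-2 * t) + (1 - Real.exp (-2 * t)) * z ^ 2 := by
  have h1 : Real.exp (-2 * t) ≤ 1 := Real.exp_le_one_iff.mpr (by linarith)
  have h2 : 0 < Real.exp (-2 * t) := Real.exp_pos _
  nlinarith [sq_nonneg z]

lemma hasDerivAt_Phi {t : ℝ} (ht : 0 ≤ t) (z : ℝ) :
    HasDerivAt (fun s => Phi s z) (Phi t z - (Phi t z) ^ 3) t := by
  set D : ℝ → ℝ := fun s => Real.exp (-2 * s) + (1 - Real.exp (-2 * s)) * z ^ 2 with hD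
  have hDpos : 0 < D t := D_pos ht z
  have hlin : HasDerivAt (fun s : ℝ => -2 * s) (-2) t := by
    simpa using (hasDerivAt_id t).const_mul (-2 : ℝ)
  have he : HasDerivAt (fun s : ℝ => Real.exp (-2 * s)) (Real.exp (-2 * t) * (-2)) t :=
    hlin.exp
  have hDd : HasDerivAt D (Real.exp (-2 * t) * (-2) + (-(Real.exp (-2 * t) * (-2))) * z ^ 2) t :=
    he.add (((he.const_sub 1)).mul_const (z ^ 2))
  have hs : HasDerivAt (fun s => Real.sqrt (D s))
      ((Real.exp (-2 * t) * (-2) + (-(Real.exp (-2 * t) * (-2))) * z ^ 2) /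
        (2 * Real.sqrt (D t))) t := by
    have := (Real.hasDerivAt_sqrt (ne_of_gt hDpos)).comp t hDd
    simpa [div_eq_mul_inv, mul_comm, mul_assoc, Function.comp_def] using this
  have hsqrt_pos : 0 < Real.sqrt (D t) := Real.sqrt_pos.mpr hDpos
  have hf : HasDerivAt (fun s => Phi s z)
      ((0 * Real.sqrt (D t) - z * ((Real.exp (-2 * t) * (-2) + (-(Real.exp (-2 * t) * (-2))) * z ^ 2) /
        (2 * Real.sqrt (D t)))) / (Real.sqrt (D t)) ^ 2) t :=
    (hasDerivAt_const t z).div hs (ne_of_gt hsqrt_pos)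
  convert hf using 1
  have hsq : Real.sqrt (D t) ^ 2 = D t := Real.sq_sqrt hDpos.le
  have hne : Real.sqrt (D t) ≠ 0 := ne_of_gt hsqrt_pos
  set s := Real.sqrt (D t) with hsdef
  set E := Real.exp (-2 * t) with hEdef
  have hDt : D t = E + (1 - E) * z ^ 2 := rfl
  show Phi t z - (Phi t z) ^ 3 = _
  rw [Phi]
  show z / s - (z / s) ^ 3 = _
  rw [hDt] at hsq
  field_simp
  linear_combination z * hsq

lemma Phi_zero (z : ℝ) : Phi 0 z = z := by
  simp [Phi]

lemma Phi_bound {t : ℝ} (ht : 0 ≤ t) (ht1 : t ≤ 1) (z : ℝ) :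
    |Phi t z| ≤ Real.exp 1 * |z| := by
  have hDpos := D_pos ht z
  have hs : Real.exp (-t) ≤ Real.sqrt (Real.exp (-2 * t) + (1 - Real.exp (-2 * t)) * z ^ 2) := by
    have h1 : Real.exp (-2 * t) ≤ 1 := Real.exp_le_one_iff.mpr (by linarith)
    have : Real.exp (-t) = Real.sqrt (Real.exp (-2 * t)) := by
      rw [show (-2 : ℝ) * t = (-t) + (-t) by ring, Real.exp_add,
        Real.sqrt_mul_self (Real.exp_pos _).le]
    rw [this]
    exact Real.sqrt_le_sqrt (by nlinarith [sq_nonneg z])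
  have hspos : 0 < Real.sqrt (Real.exp (-2 * t) + (1 - Real.exp (-2 * t)) * z ^ 2) :=
    lt_of_lt_of_le (Real.exp_pos _) hs
  rw [Phi, abs_div, abs_of_pos hspos]
  rw [div_le_iff₀ hspos]
  calc |z| = Real.exp (-t) * (Real.exp t * |z|) := by
        rw [← mul_assoc, ← Real.exp_add]; simp
    _ ≤ Real.sqrt (Real.exp (-2 * t) + (1 - Real.exp (-2 * t)) * z ^ 2) * (Real.exp t * |z|) := by
        apply mul_le_mul_of_nonneg_right hs (by positivity)
    _ ≤ _ := by
        have : Real.exp t ≤ Real.exp 1 := Real.exp_le_exp.mpr ht1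
        have := mul_le_mul_of_nonneg_right this (abs_nonneg z)
        nlinarith [hspos.le, abs_nonneg z]

lemma poly_facts {a : ℝ} (ha : 0 ≤ a) : a ≤ 1 + a ^ 5 ∧ a ^ 3 ≤ 1 + a ^ 5 := by
  constructor
  · nlinarith [sq_nonneg (a ^ 2 - 1), sq_nonneg (a - 1), sq_nonneg a, sq_nonneg (a ^ 2 - a)]
  · nlinarith [sq_nonneg (a ^ 2 - 1), sq_nonneg (a - 1), sq_nonneg a, sq_nonneg (a ^ 2 - a),
      mul_nonneg (mul_nonneg ha ha) ha]

set_option maxHeartbeats 1000000 in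
/-- For every `Δt₀ ∈ (0,1)`, there exists `C(Δt₀) ∈ (0,∞)` such that for all
`Δt ∈ (0, Δt₀]` and all `z : ℝ`, `|Ψ_{Δt}(z) - Ψ₀(z)| ≤ C(Δt₀) Δt (1 + |z|⁵)`,
where `Ψ₀(z) = z - z³`. -/
theorem stmt15 (Δt₀ : ℝ) (hΔt₀ : Δt₀ ∈ Set.Ioo (0 : ℝ) 1) :
    ∃ C : ℝ, 0 < C ∧
      ∀ Δt ∈ Set.Ioc (0 : ℝ) Δt₀, ∀ z : ℝ,
        |Psi Δt z - (z - z ^ 3)| ≤ C * Δt * (1 + |z| ^ 5) := by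
  set e := Real.exp 1 with he_def
  have he1 : 1 ≤ e := Real.one_le_exp (by norm_num)
  have he0 : (0:ℝ) < e := lt_of_lt_of_le one_pos he1
  clear_value e
  refine ⟨8 * e ^ 5, by positivity, ?_⟩
  rintro Δt ⟨hΔt0, hΔtle⟩ z
  have hΔt1 : Δt ≤ 1 := le_trans hΔtle hΔt₀.2.le
  set a := |z| with ha_def
  have ha : 0 ≤ a := abs_nonneg z
  have hz2 : z ^ 2 = a ^ 2 := by rw [ha_def]; exact (sq_abs z).symm
  clear_value a
  set M := e * a + e ^ 3 * a ^ 3 with hM_def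
  have hM0 : 0 ≤ M := by positivity
  clear_value M
  -- step 1 : |Phi x z - z| ≤ M * x on [0, Δt]
  have hderiv : ∀ x ∈ Set.Icc (0:ℝ) Δt, HasDerivWithinAt (fun s => Phi s z)
      (Phi x z - (Phi x z) ^ 3) (Set.Icc 0 Δt) x :=
    fun x hx => (hasDerivAt_Phi hx.1 z).hasDerivWithinAt
  have habs : ∀ x, 0 ≤ x → x ≤ Δt → |Phi x z| ≤ e * a := by
    intro x h0 h1
    have := Phi_bound h0 (le_trans h1 hΔt1) z
    rwa [← he_def, ← ha_def] at this
  have hbound : ∀ x ∈ Set.Ico (0:ℝ) Δt, ‖Phi x z - (Phi x z) ^ 3‖ ≤ M := by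
    intro x hx
    have hb : |Phi x z| ≤ e * a := habs x hx.1 hx.2.le
    have hb3 : |Phi x z| ^ 3 ≤ (e * a) ^ 3 :=
      pow_le_pow_left₀ (abs_nonneg _) hb 3
    have h1 : |Phi x z - (Phi x z) ^ 3| ≤ |Phi x z| + |Phi x z| ^ 3 := by
      calc |Phi x z - (Phi x z) ^ 3| ≤ |Phi x z| + |(Phi x z) ^ 3| := abs_sub _ _
        _ = |Phi x z| + |Phi x z| ^ 3 := by rw [abs_pow]
    rw [Real.norm_eq_abs, hM_def]
    have he3 : e ≤ e ^ 3 := le_self_pow₀ he1 (by norm_num)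
    nlinarith [abs_nonneg (Phi x z), pow_nonneg ha 3]
  have step1 := norm_image_sub_le_of_norm_deriv_le_segment' hderiv hbound
  -- step 2
  set g : ℝ → ℝ := fun s => Phi s z - s * (z - z ^ 3) with hg_def
  have hderiv2 : ∀ x ∈ Set.Icc (0:ℝ) Δt, HasDerivWithinAt g
      ((Phi x z - (Phi x z) ^ 3) - (z - z ^ 3)) (Set.Icc 0 Δt) x := by
    intro x hx
    have : HasDerivAt g ((Phi x z - (Phi x z) ^ 3) - 1 * (z - z ^ 3)) x :=
      (hasDerivAt_Phi hx.1 z).sub ((hasDerivAt_id x).mul_const _)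
    simpa using this.hasDerivWithinAt
  set K := M * Δt * (1 + 3 * e ^ 2 * z ^ 2) with hK_def
  have hbound2 : ∀ x ∈ Set.Ico (0:ℝ) Δt,
      ‖(Phi x z - (Phi x z) ^ 3) - (z - z ^ 3)‖ ≤ K := by
    intro x hx
    have hxIcc : x ∈ Set.Icc (0:ℝ) Δt := Set.Ico_subset_Icc_self hx
    have h1 : ‖Phi x z - Phi 0 z‖ ≤ M * (x - 0) := step1 x hxIcc
    rw [Phi_zero, Real.norm_eq_abs, sub_zero] at h1
    have hPz : |Phi x z - z| ≤ M * Δt :=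
      le_trans h1 (by nlinarith [hx.2.le, hx.1, hM0])
    have hb : |Phi x z| ≤ e * a := habs x hx.1 hx.2.le
    set P := Phi x z with hP_def
    clear_value P
    have hfac : P ^ 3 - z ^ 3 = (P - z) * (P ^ 2 + P * z + z ^ 2) := by ring
    have hquad : |P ^ 2 + P * z + z ^ 2| ≤ 3 * e ^ 2 * z ^ 2 := by
      have eP : |P ^ 2| = |P| ^ 2 := abs_pow P 2
      have ez : |z ^ 2| = z ^ 2 := by rw [abs_pow, sq_abs]
      have ePz : |P * z| = |P| * |z| := abs_mul P z
      have h2 : |P ^ 2 + P * z + z ^ 2| ≤ |P| ^ 2 + |P| * |z| + z ^ 2 := by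
        have u1 := abs_add_le (P ^ 2 + P * z) (z ^ 2)
        have u2 := abs_add_le (P ^ 2) (P * z)
        linarith [eP, ez, ePz]
      rw [← ha_def] at h2
      have hee : 1 ≤ e ^ 2 := one_le_pow₀ he1
      have c1 : |P| ^ 2 ≤ e ^ 2 * a ^ 2 := by
        nlinarith [mul_le_mul hb hb (abs_nonneg P) (mul_nonneg he0.le ha)]
      have c2 : |P| * a ≤ e ^ 2 * a ^ 2 := by
        have h := mul_le_mul_of_nonneg_right hb ha
        nlinarith [sq_nonneg a, he1, ha]
      have c3 : z ^ 2 ≤ e ^ 2 * a ^ 2 := by nlinarith [sq_nonneg a]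
      nlinarith [h2, c1, c2, c3]
    rw [Real.norm_eq_abs]
    calc |(P - P ^ 3) - (z - z ^ 3)| = |(P - z) - (P ^ 3 - z ^ 3)| := by ring_nf
      _ ≤ |P - z| + |P ^ 3 - z ^ 3| := abs_sub _ _
      _ = |P - z| + |P - z| * |P ^ 2 + P * z + z ^ 2| := by rw [hfac, abs_mul]
      _ ≤ M * Δt + M * Δt * (3 * e ^ 2 * z ^ 2) := by
          have := mul_le_mul hPz hquad (abs_nonneg _) (mul_nonneg hM0 hΔt0.le)
          linarith
      _ = K := by rw [hK_def]; ring
  have step2 := norm_image_sub_le_of_norm_deriv_le_segment' hderiv2 hbound2 Δt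
    (Set.right_mem_Icc.mpr hΔt0.le)
  have hg0 : g 0 = z := by simp [hg_def, Phi_zero]
  have hgΔt : g Δt - g 0 = (Psi Δt z - (z - z ^ 3)) * Δt := by
    rw [hg0, hg_def]
    simp only [Psi]
    field_simp [hΔt0.ne']
    ring
  rw [Real.norm_eq_abs, hgΔt, abs_mul, abs_of_pos hΔt0, sub_zero] at step2
  have hstep : |Psi Δt z - (z - z ^ 3)| ≤ K := le_of_mul_le_mul_right step2 hΔt0
  refine le_trans hstep ?_
  rw [hK_def, hz2]
  have hfin : M * (1 + 3 * e ^ 2 * a ^ 2) ≤ 8 * e ^ 5 * (1 + a ^ 5) := by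
    obtain ⟨hp1, hp3⟩ := poly_facts ha
    have hp5 : a ^ 5 ≤ 1 + a ^ 5 := by nlinarith
    have he5 : e ≤ e ^ 5 := le_self_pow₀ he1 (by norm_num)
    have he35 : e ^ 3 ≤ e ^ 5 := pow_le_pow_right₀ he1 (by norm_num)
    have he5nn : (0:ℝ) ≤ e ^ 5 := pow_nonneg he0.le 5
    have t1 : e * a ≤ e ^ 5 * (1 + a ^ 5) := mul_le_mul he5 hp1 ha he5nn
    have t3 : e ^ 3 * a ^ 3 ≤ e ^ 5 * (1 + a ^ 5) :=
      mul_le_mul he35 hp3 (pow_nonneg ha 3) he5nn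
    have t5 : e ^ 5 * a ^ 5 ≤ e ^ 5 * (1 + a ^ 5) := mul_le_mul_of_nonneg_left hp5 he5nn
    have expand : M * (1 + 3 * e ^ 2 * a ^ 2) =
        e * a + 4 * (e ^ 3 * a ^ 3) + 3 * (e ^ 5 * a ^ 5) := by
      rw [hM_def]; ring
    linarith
  nlinarith [mul_le_mul_of_nonneg_right hfin hΔt0.le]
end
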